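/- arXiv:1005.0807 — 7 statements merged into one kernel-verified Lean document; each statement's English description precedes it below -/
import Mathlib

section
/- Let V, W be finite-dimensional complex vector spaces, and X = (A,B,I,J) with A,B ∈ End(V), I ∈ Hom(W,V), J ∈ Hom(V,W). The derivative of the ADHM map μ(A,B,I,J) = [A,B] + IJ at X, given by D_Xμ(a,b,i,j) = [A,b] + [a,B] + Ij + iJ, is surjective if and only if the linear map End(V) → End(V)⊕End(V)⊕Hom(W,V)⊕Hom(V,W), y ↦ ([A,y],[B,y], yI, Jy), is injective. -/
open LinearMap Module

/-- Nondegeneracy of the trace pairing: if `trace (z ∘ i) = 0` for all `i`, then `z = 0`. -/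
lemma trace_comp_nondegen {V W : Type} [AddCommGroup V] [Module ℂ V] [FiniteDimensional ℂ V]
    [AddCommGroup W] [Module ℂ W] [FiniteDimensional ℂ W]
    (z : V →ₗ[ℂ] W) (h : ∀ i : W →ₗ[ℂ] V, trace ℂ W (z ∘ₗ i) = 0) : z = 0 := by
  ext v
  rw [LinearMap.zero_apply, ← Module.forall_dual_apply_eq_zero_iff ℂ]
  intro φ
  have key := h (dualTensorHom ℂ W V (φ ⊗ₜ v))
  have : z ∘ₗ dualTensorHom ℂ W V (φ ⊗ₜ v) = dualTensorHom ℂ W W (φ ⊗ₜ z v) := by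
    ext w; simp [dualTensorHom_apply]
  rw [this, trace_eq_contract_apply] at key
  simpa using key

/-- The trace representation map `y ↦ (m ↦ trace (y * m))`. -/
noncomputable def traceRep (V : Type) [AddCommGroup V] [Module ℂ V] [FiniteDimensional ℂ V] :
    Module.End ℂ V →ₗ[ℂ] Module.Dual ℂ (Module.End ℂ V) :=
  (LinearMap.mul ℂ (Module.End ℂ V)).compr₂ (trace ℂ V)

@[simp] lemma traceRep_apply {V : Type} [AddCommGroup V] [Module ℂ V] [FiniteDimensional ℂ V]
    (y m : Module.End ℂ V) : traceRep V y m = trace ℂ V (y * m) := rfl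

lemma traceRep_surjective (V : Type) [AddCommGroup V] [Module ℂ V] [FiniteDimensional ℂ V] :
    Function.Surjective (traceRep V) := by
  have hinj : Function.Injective (traceRep V) := by
    rw [← LinearMap.ker_eq_bot, Submodule.eq_bot_iff]
    intro y hy
    exact trace_comp_nondegen y fun m => congrFun (congrArg DFunLike.coe hy) m
  exact (LinearMap.injective_iff_surjective_of_finrank_eq_finrank
    (Subspace.dual_finrank_eq).symm).mp hinj

/-- The derivative of the ADHM map, as a bundled linear map. -/
noncomputable def adhmD {V W : Type} [AddCommGroup V] [Module ℂ V]
    [AddCommGroup W] [Module ℂ W]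
    (A B : Module.End ℂ V) (I : W →ₗ[ℂ] V) (J : V →ₗ[ℂ] W) :
    (Module.End ℂ V × Module.End ℂ V × (W →ₗ[ℂ] V) × (V →ₗ[ℂ] W)) →ₗ[ℂ] Module.End ℂ V where
  toFun x := A * x.2.1 - x.2.1 * A + x.1 * B - B * x.1
      + (I ∘ₗ x.2.2.2 : Module.End ℂ V) + (x.2.2.1 ∘ₗ J : Module.End ℂ V)
  map_add' x y := by
    simp only [Prod.fst_add, Prod.snd_add, mul_add, add_mul, comp_add, add_comp]
    abel
  map_smul' c x := by
    simp only [Prod.smul_fst, Prod.smul_snd, mul_smul_comm, smul_mul_assoc, comp_smul,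
      smul_comp, RingHom.id_apply, smul_add, smul_sub]

/-- The derivative of the ADHM map at X = (A,B,I,J) is surjective iff
the map y ↦ ([A,y],[B,y],yI,Jy) is injective. -/
theorem adhm_derivative_surjective_iff
    {V W : Type} [AddCommGroup V] [Module ℂ V] [FiniteDimensional ℂ V]
    [AddCommGroup W] [Module ℂ W] [FiniteDimensional ℂ W]
    (A B : Module.End ℂ V) (I : W →ₗ[ℂ] V) (J : V →ₗ[ℂ] W) :
    Function.Surjective
      (fun x : Module.End ℂ V × Module.End ℂ V × (W →ₗ[ℂ] V) × (V →ₗ[ℂ] W) =>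
        A * x.2.1 - x.2.1 * A + x.1 * B - B * x.1
          + (I ∘ₗ x.2.2.2 : Module.End ℂ V) + (x.2.2.1 ∘ₗ J : Module.End ℂ V)) ↔
    Function.Injective
      (fun y : Module.End ℂ V =>
        (A * y - y * A, B * y - y * B, y ∘ₗ I, J ∘ₗ y)) := by
  have hfun : (fun x : Module.End ℂ V × Module.End ℂ V × (W →ₗ[ℂ] V) × (V →ₗ[ℂ] W) =>
        A * x.2.1 - x.2.1 * A + x.1 * B - B * x.1
          + (I ∘ₗ x.2.2.2 : Module.End ℂ V) + (x.2.2.1 ∘ₗ J : Module.End ℂ V))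
      = ⇑(adhmD A B I J) := rfl
  rw [hfun]
  constructor
  · -- surjective → injective
    intro hsurj y₁ y₂ h
    simp only [Prod.mk.injEq] at h
    obtain ⟨h1, h2, h3, h4⟩ := h
    rw [← sub_eq_zero]
    set y := y₁ - y₂ with hy
    have e1 : y * A = A * y := by
      have h' : A * y - y * A = 0 := by
        rw [hy, mul_sub, sub_mul, sub_sub_sub_comm, h1, sub_self]
      exact (sub_eq_zero.mp h').symm
    have e2 : y * B = B * y := by
      have h' : B * y - y * B = 0 := by
        rw [hy, mul_sub, sub_mul, sub_sub_sub_comm, h2, sub_self]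
      exact (sub_eq_zero.mp h').symm
    have e3 : y ∘ₗ I = 0 := by rw [hy, LinearMap.sub_comp, h3, sub_self]
    have e4 : J ∘ₗ y = 0 := by rw [hy, LinearMap.comp_sub, h4, sub_self]
    apply trace_comp_nondegen
    intro m
    obtain ⟨⟨a, b, i, j⟩, hx⟩ := hsurj m
    rw [← Module.End.mul_eq_comp, ← hx]
    show trace ℂ V (y * (A * b - b * A + a * B - B * a
      + (I ∘ₗ j : Module.End ℂ V) + (i ∘ₗ J : Module.End ℂ V))) = 0
    have t1 : trace ℂ V (y * (A * b)) = trace ℂ V (y * (b * A)) := by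
      calc trace ℂ V (y * (A * b)) = trace ℂ V (A * (y * b)) := by
            rw [← mul_assoc, e1, mul_assoc]
        _ = trace ℂ V ((y * b) * A) := trace_mul_comm ℂ A (y * b)
        _ = trace ℂ V (y * (b * A)) := by rw [mul_assoc]
    have t2 : trace ℂ V (y * (a * B)) = trace ℂ V (y * (B * a)) := by
      calc trace ℂ V (y * (a * B)) = trace ℂ V ((y * a) * B) := by rw [mul_assoc]
        _ = trace ℂ V (B * (y * a)) := trace_mul_comm ℂ (y * a) B
        _ = trace ℂ V ((y * B) * a) := by rw [← mul_assoc, e2]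
        _ = trace ℂ V (y * (B * a)) := by rw [mul_assoc]
    have t3 : y * (I ∘ₗ j : Module.End ℂ V) = 0 := by
      rw [Module.End.mul_eq_comp, ← comp_assoc, e3, zero_comp]
    have t4 : trace ℂ V (y * (i ∘ₗ J : Module.End ℂ V)) = 0 := by
      rw [Module.End.mul_eq_comp, ← comp_assoc, trace_comp_comm', ← comp_assoc, e4, zero_comp, map_zero]
    simp only [mul_add, mul_sub, map_add, map_sub, t3, t4, map_zero, t1, t2]
    ring
  · -- injective → surjective
    intro hinj
    by_contra hns
    rw [← LinearMap.range_eq_top] at hns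
    obtain ⟨φ, hφ0, hφ⟩ := Submodule.exists_dual_map_eq_bot_of_lt_top
      (lt_top_iff_ne_top.mpr hns) inferInstance
    obtain ⟨y, rfl⟩ := traceRep_surjective V φ
    have hy0 : y ≠ 0 := by rintro rfl; simp at hφ0
    have hvan : ∀ x, trace ℂ V (y * adhmD A B I J x) = 0 := by
      intro x
      have hm : adhmD A B I J x ∈ LinearMap.range (adhmD A B I J) := LinearMap.mem_range_self _ x
      have := Submodule.mem_map_of_mem (f := traceRep V y) hm
      rw [hφ] at this
      simpa using this
    have eA : A * y - y * A = 0 := by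
      have h' : y * A - A * y = 0 := by
        apply trace_comp_nondegen
        intro b
        rw [← Module.End.mul_eq_comp]
        have hb := hvan (0, b, 0, 0)
        have hDb : adhmD A B I J (0, b, 0, 0) = A * b - b * A := by
          show A * b - b * A + 0 * B - B * 0 + (I ∘ₗ (0 : V →ₗ[ℂ] W) : Module.End ℂ V)
            + ((0 : W →ₗ[ℂ] V) ∘ₗ J : Module.End ℂ V) = _
          simp
        rw [hDb] at hb
        calc trace ℂ V ((y * A - A * y) * b)
            = trace ℂ V (y * (A * b)) - trace ℂ V (A * y * b) := by
              rw [sub_mul, map_sub, ← mul_assoc]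
          _ = trace ℂ V (y * (A * b)) - trace ℂ V (y * (b * A)) := by
              rw [mul_assoc A y b, trace_mul_comm ℂ A (y * b), mul_assoc]
          _ = trace ℂ V (y * (A * b - b * A)) := by rw [mul_sub, map_sub]
          _ = 0 := hb
      rw [sub_eq_zero] at h' ⊢
      exact h'.symm
    have eB : B * y - y * B = 0 := by
      apply trace_comp_nondegen
      intro a
      rw [← Module.End.mul_eq_comp]
      have ha := hvan (a, 0, 0, 0)
      have hDa : adhmD A B I J (a, 0, 0, 0) = a * B - B * a := by
        show A * 0 - 0 * A + a * B - B * a + (I ∘ₗ (0 : V →ₗ[ℂ] W) : Module.End ℂ V)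
          + ((0 : W →ₗ[ℂ] V) ∘ₗ J : Module.End ℂ V) = _
        simp
      rw [hDa] at ha
      calc trace ℂ V ((B * y - y * B) * a)
          = trace ℂ V (B * (y * a)) - trace ℂ V (y * (B * a)) := by
            rw [sub_mul, map_sub, mul_assoc, mul_assoc]
        _ = trace ℂ V (y * (a * B)) - trace ℂ V (y * (B * a)) := by
            rw [trace_mul_comm ℂ B (y * a), mul_assoc]
        _ = trace ℂ V (y * (a * B - B * a)) := by rw [mul_sub, map_sub]
        _ = 0 := ha
    have eI : y ∘ₗ I = 0 := by
      apply trace_comp_nondegen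
      intro j
      have hj := hvan (0, 0, 0, j)
      have hDj : adhmD A B I J (0, 0, 0, j) = (I ∘ₗ j : Module.End ℂ V) := by
        show A * 0 - 0 * A + 0 * B - B * 0 + (I ∘ₗ j : Module.End ℂ V)
          + ((0 : W →ₗ[ℂ] V) ∘ₗ J : Module.End ℂ V) = _
        simp
      rw [hDj, Module.End.mul_eq_comp, ← comp_assoc] at hj
      exact hj
    have eJ : J ∘ₗ y = 0 := by
      apply trace_comp_nondegen
      intro i
      have hi := hvan (0, 0, i, 0)
      have hDi : adhmD A B I J (0, 0, i, 0) = (i ∘ₗ J : Module.End ℂ V) := by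
        show A * 0 - 0 * A + 0 * B - B * 0 + (I ∘ₗ (0 : V →ₗ[ℂ] W) : Module.End ℂ V)
          + (i ∘ₗ J : Module.End ℂ V) = _
        simp
      rw [hDi, Module.End.mul_eq_comp, ← comp_assoc, trace_comp_comm', ← comp_assoc] at hi
      exact hi
    apply hy0
    apply hinj (a₁ := y) (a₂ := 0)
    show (A * y - y * A, B * y - y * B, y ∘ₗ I, J ∘ₗ y)
      = (A * 0 - 0 * A, B * 0 - 0 * B, (0 : Module.End ℂ V) ∘ₗ I, J ∘ₗ (0 : Module.End ℂ V))
    rw [eA, eB, eI, eJ]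
    simp
end

section
/- If an ADHM datum X = (A,B,I,J) is stable (no proper subspace S ⊊ V satisfies A(S) ⊆ S, B(S) ⊆ S, and I(W) ⊆ S), then the derivative D_Xμ of the ADHM map μ(A,B,I,J) = [A,B]+IJ at X is surjective onto End(V). -/
open LinearMap

/-- Trace pairing between Hom(W,V) and Hom(V,W) is nondegenerate in the first slot. -/
lemma trace_pairing_eq_zero
    {V W : Type} [AddCommGroup V] [Module ℂ V] [FiniteDimensional ℂ V]
    [AddCommGroup W] [Module ℂ W] [FiniteDimensional ℂ W]
    (M : W →ₗ[ℂ] V) (h : ∀ j : V →ₗ[ℂ] W, LinearMap.trace ℂ V (M ∘ₗ j) = 0) :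
    M = 0 := by
  ext w
  show M w = 0
  rw [← Module.forall_dual_apply_eq_zero_iff ℂ (M w)]
  intro φ
  have := h (dualTensorHom ℂ V W (φ ⊗ₜ w))
  have hcomp : M ∘ₗ dualTensorHom ℂ V W (φ ⊗ₜ w) = dualTensorHom ℂ V V (φ ⊗ₜ (M w)) := by
    ext x; simp [dualTensorHom_apply]
  rw [hcomp, LinearMap.trace_eq_contract_apply, contractLeft_apply] at this
  simpa using this

lemma trace_endo_eq_zero
    {V : Type} [AddCommGroup V] [Module ℂ V] [FiniteDimensional ℂ V]
    (C : Module.End ℂ V) (h : ∀ f : Module.End ℂ V, LinearMap.trace ℂ V (C * f) = 0) :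
    C = 0 :=
  trace_pairing_eq_zero C h

/-- If X = (A,B,I,J) is stable, then the derivative of the ADHM map at X
is surjective onto End(V). -/
theorem adhm_derivative_surjective_of_stable
    {V W : Type} [AddCommGroup V] [Module ℂ V] [FiniteDimensional ℂ V]
    [AddCommGroup W] [Module ℂ W] [FiniteDimensional ℂ W]
    (A B : Module.End ℂ V) (I : W →ₗ[ℂ] V) (J : V →ₗ[ℂ] W)
    (hstable : ∀ S : Submodule ℂ V, Submodule.map A S ≤ S → Submodule.map B S ≤ S →
      LinearMap.range I ≤ S → S = ⊤) :
    Function.Surjective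
      (fun x : Module.End ℂ V × Module.End ℂ V × (W →ₗ[ℂ] V) × (V →ₗ[ℂ] W) =>
        A * x.2.1 - x.2.1 * A + x.1 * B - B * x.1
          + (I ∘ₗ x.2.2.2 : Module.End ℂ V) + (x.2.2.1 ∘ₗ J : Module.End ℂ V)) := by
  set F := (fun x : Module.End ℂ V × Module.End ℂ V × (W →ₗ[ℂ] V) × (V →ₗ[ℂ] W) =>
        A * x.2.1 - x.2.1 * A + x.1 * B - B * x.1
          + (I ∘ₗ x.2.2.2 : Module.End ℂ V) + (x.2.2.1 ∘ₗ J : Module.End ℂ V)) with hF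
  -- F is linear
  have hadd : ∀ x y, F (x + y) = F x + F y := by
    intro x y
    simp only [hF, Prod.fst_add, Prod.snd_add, mul_add, add_mul, comp_add, add_comp]
    abel
  have hsmul : ∀ (c : ℂ) x, F (c • x) = c • F x := by
    intro c x
    simp only [hF, Prod.smul_fst, Prod.smul_snd, mul_smul_comm, smul_mul_assoc,
      comp_smul, smul_comp, smul_sub, smul_add]
  let T : (Module.End ℂ V × Module.End ℂ V × (W →ₗ[ℂ] V) × (V →ₗ[ℂ] W)) →ₗ[ℂ] Module.End ℂ V :=
    { toFun := F, map_add' := hadd, map_smul' := hsmul }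
  change Function.Surjective T
  rw [← LinearMap.range_eq_top]
  by_contra hne
  obtain ⟨φ, hφne, hφbot⟩ :=
    Submodule.exists_dual_map_eq_bot_of_lt_top (lt_top_iff_ne_top.mpr hne)
      inferInstance
  have hφ0 : ∀ x, φ (T x) = 0 := by
    intro x
    have : φ (T x) ∈ Submodule.map φ (LinearMap.range T) :=
      Submodule.mem_map_of_mem (LinearMap.mem_range_self T x)
    rw [hφbot] at this
    simpa using this
  -- represent φ via the trace pairing
  let Φ : Module.End ℂ V →ₗ[ℂ] Module.Dual ℂ (Module.End ℂ V) :=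
    LinearMap.compr₂ (LinearMap.mul ℂ (Module.End ℂ V)) (LinearMap.trace ℂ V)
  have hΦinj : Function.Injective Φ := by
    rw [← LinearMap.ker_eq_bot]
    apply (Submodule.eq_bot_iff _).mpr
    intro C hC
    apply trace_endo_eq_zero C
    intro f
    have : Φ C = 0 := hC
    exact congrFun (congrArg DFunLike.coe this) f
  have hΦsurj : Function.Surjective Φ :=
    (LinearMap.injective_iff_surjective_of_finrank_eq_finrank
      (Subspace.dual_finrank_eq).symm).mp hΦinj
  obtain ⟨C, hC⟩ := hΦsurj φ
  have hφtr : ∀ f : Module.End ℂ V, φ f = LinearMap.trace ℂ V (C * f) := by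
    intro f; rw [← hC]; rfl
  -- Derive the commutation relations
  have hCA : C * A = A * C := by
    rw [← sub_eq_zero]
    apply trace_endo_eq_zero
    intro b
    have h0 := hφ0 (0, b, 0, 0)
    rw [hφtr] at h0
    have hTx : T (0, b, 0, 0) = A * b - b * A := by
      show F (0, b, 0, 0) = A * b - b * A
      simp [hF]
    rw [hTx] at h0
    have : LinearMap.trace ℂ V (C * (A * b)) - LinearMap.trace ℂ V (C * (b * A)) = 0 := by
      rw [← map_sub, ← mul_sub]; simpa using h0
    have e1 : (C * A - A * C) * b = C * (A * b) - A * (C * b) := by noncomm_ring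
    rw [e1, map_sub, LinearMap.trace_mul_comm ℂ A (C * b), mul_assoc]
    exact this
  have hCB : C * B = B * C := by
    rw [← sub_eq_zero]
    apply trace_endo_eq_zero
    intro a
    have h0 := hφ0 (a, 0, 0, 0)
    rw [hφtr] at h0
    have hTx : T (a, 0, 0, 0) = a * B - B * a := by
      show F (a, 0, 0, 0) = a * B - B * a
      simp [hF]
    rw [hTx] at h0
    have : LinearMap.trace ℂ V (C * (a * B)) - LinearMap.trace ℂ V (C * (B * a)) = 0 := by
      rw [← map_sub, ← mul_sub]; simpa using h0
    have e1 : (C * B - B * C) * a = C * (B * a) - B * (C * a) := by noncomm_ring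
    rw [e1, map_sub, LinearMap.trace_mul_comm ℂ B (C * a), mul_assoc]
    linear_combination -this
  have hCI : C ∘ₗ I = 0 := by
    apply trace_pairing_eq_zero
    intro j
    have h0 := hφ0 (0, 0, 0, j)
    rw [hφtr] at h0
    have hTx : T (0, 0, 0, j) = (I ∘ₗ j : Module.End ℂ V) := by
      show F (0, 0, 0, j) = (I ∘ₗ j : Module.End ℂ V)
      simp [hF]
    rw [hTx] at h0
    have : C * (I ∘ₗ j : Module.End ℂ V) = (C ∘ₗ I) ∘ₗ j := by
      ext x; rfl
    rw [this] at h0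
    exact h0
  -- ker C is invariant and contains range I
  have hker : LinearMap.ker C = ⊤ := by
    apply hstable
    · rintro x ⟨y, hy, rfl⟩
      have : C (A y) = A (C y) := by
        have := congrFun (congrArg DFunLike.coe hCA) y
        simpa using this
      simp only [LinearMap.mem_ker] at hy ⊢
      rw [this, hy, map_zero]
    · rintro x ⟨y, hy, rfl⟩
      have : C (B y) = B (C y) := by
        have := congrFun (congrArg DFunLike.coe hCB) y
        simpa using this
      simp only [LinearMap.mem_ker] at hy ⊢
      rw [this, hy, map_zero]
    · rintro x ⟨w, rfl⟩
      have := congrFun (congrArg DFunLike.coe hCI) w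
      simpa using this
  have hC0 : C = 0 := by
    ext x
    have : x ∈ LinearMap.ker C := hker ▸ Submodule.mem_top
    simpa using this
  apply hφne
  ext f
  rw [hφtr, hC0]
  simp
end

section
/- Let X = (A,B,I,J) be an ADHM datum. If the derivative D_Xμ of the ADHM map at X is surjective, then the stabilizer of X in GL(V) under the action g·(A,B,I,J) = (gAg⁻¹, gBg⁻¹, gI, Jg⁻¹) is trivial. -/
lemma trace_mul_std {n : ℕ} (M : Matrix (Fin n) (Fin n) ℂ) (i j : Fin n) :
    (M * Matrix.single j i 1).trace = M i j := by
  classical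
  simp [Matrix.trace, Matrix.diag, Matrix.mul_apply, Matrix.single,
    Finset.sum_ite_eq, ite_and]

lemma trace_nondeg {V : Type} [AddCommGroup V] [Module ℂ V] [FiniteDimensional ℂ V]
    (h : Module.End ℂ V) (hz : ∀ c : Module.End ℂ V, LinearMap.trace ℂ V (h * c) = 0) :
    h = 0 := by
  classical
  let b := Module.finBasis ℂ V
  have key : LinearMap.toMatrix b b h = 0 := by
    ext i j
    have := hz ((LinearMap.toMatrix b b).symm (Matrix.single j i 1))
    rw [LinearMap.trace_eq_matrix_trace ℂ b, LinearMap.toMatrix_mul,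
      (LinearMap.toMatrix b b).apply_symm_apply, trace_mul_std] at this
    simpa using this
  have := congrArg (LinearMap.toMatrix b b).symm key
  simpa using this

lemma comm_trace {V : Type} [AddCommGroup V] [Module ℂ V] [FiniteDimensional ℂ V]
    (h P Q : Module.End ℂ V) (hc : h * P = P * h) :
    LinearMap.trace ℂ V (h * (P * Q)) = LinearMap.trace ℂ V (h * (Q * P)) := calc
  LinearMap.trace ℂ V (h * (P * Q)) = LinearMap.trace ℂ V (P * (h * Q)) := by
    rw [← mul_assoc, hc, mul_assoc]
  _ = LinearMap.trace ℂ V ((h * Q) * P) := LinearMap.trace_mul_comm ℂ P (h * Q)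
  _ = LinearMap.trace ℂ V (h * (Q * P)) := by rw [mul_assoc]

/-- If the derivative of the ADHM map at X is surjective, then the stabilizer
of X in GL(V) under g·(A,B,I,J) = (gAg⁻¹,gBg⁻¹,gI,Jg⁻¹) is trivial. -/
theorem adhm_stabilizer_trivial_of_derivative_surjective
    {V W : Type} [AddCommGroup V] [Module ℂ V] [FiniteDimensional ℂ V]
    [AddCommGroup W] [Module ℂ W] [FiniteDimensional ℂ W]
    (A B : Module.End ℂ V) (I : W →ₗ[ℂ] V) (J : V →ₗ[ℂ] W)
    (hsurj : Function.Surjective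
      (fun x : Module.End ℂ V × Module.End ℂ V × (W →ₗ[ℂ] V) × (V →ₗ[ℂ] W) =>
        A * x.2.1 - x.2.1 * A + x.1 * B - B * x.1
          + (I ∘ₗ x.2.2.2 : Module.End ℂ V) + (x.2.2.1 ∘ₗ J : Module.End ℂ V))) :
    ∀ g : (Module.End ℂ V)ˣ,
      (g : Module.End ℂ V) * A * (↑g⁻¹ : Module.End ℂ V) = A →
      (g : Module.End ℂ V) * B * (↑g⁻¹ : Module.End ℂ V) = B →
      (g : Module.End ℂ V) ∘ₗ I = I →
      J ∘ₗ (↑g⁻¹ : Module.End ℂ V) = J →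
      g = 1 := by
  intro g hA hB hI hJ
  set h : Module.End ℂ V := (g : Module.End ℂ V) - 1 with hh
  have hgA : (g : Module.End ℂ V) * A = A * g := by
    have := congrArg (· * (g : Module.End ℂ V)) hA
    simpa [mul_assoc, Units.inv_mul] using this
  have hgB : (g : Module.End ℂ V) * B = B * g := by
    have := congrArg (· * (g : Module.End ℂ V)) hB
    simpa [mul_assoc, Units.inv_mul] using this
  have hhA : h * A = A * h := by
    simp [hh, sub_mul, mul_sub, hgA]
  have hhB : h * B = B * h := by
    simp [hh, sub_mul, mul_sub, hgB]
  have hhI : h ∘ₗ I = 0 := by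
    rw [hh, LinearMap.sub_comp, hI, Module.End.one_eq_id, LinearMap.id_comp, sub_self]
  have hJg : J ∘ₗ (g : Module.End ℂ V) = J := by
    conv_lhs => rw [← hJ]
    rw [LinearMap.comp_assoc, ← Module.End.mul_eq_comp, Units.inv_mul, Module.End.one_eq_id,
      LinearMap.comp_id]
  have hJh : J ∘ₗ h = 0 := by
    rw [hh, LinearMap.comp_sub, hJg, Module.End.one_eq_id, LinearMap.comp_id, sub_self]
  have hz : ∀ c : Module.End ℂ V, LinearMap.trace ℂ V (h * c) = 0 := by
    intro c
    obtain ⟨x, hx⟩ := hsurj c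
    rw [← hx]
    simp only [mul_add, mul_sub, map_add, map_sub]
    have t1 := comm_trace h A x.2.1 hhA
    have t2 : LinearMap.trace ℂ V (h * (x.1 * B)) = LinearMap.trace ℂ V (h * (B * x.1)) :=
      (comm_trace h B x.1 hhB).symm
    have t3 : h * (I ∘ₗ x.2.2.2 : Module.End ℂ V) = 0 := by
      rw [Module.End.mul_eq_comp, ← LinearMap.comp_assoc, hhI, LinearMap.zero_comp]
    have t4 : (x.2.2.1 ∘ₗ J : Module.End ℂ V) * h = 0 := by
      rw [Module.End.mul_eq_comp, LinearMap.comp_assoc, hJh, LinearMap.comp_zero]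
    have t4' : LinearMap.trace ℂ V (h * (x.2.2.1 ∘ₗ J : Module.End ℂ V)) = 0 := by
      rw [LinearMap.trace_mul_comm, t4, map_zero]
    rw [t1, t2, t3, t4', map_zero]
    ring
  have hzero : h = 0 := trace_nondeg h hz
  have hg1 : (g : Module.End ℂ V) = 1 := by
    have := sub_eq_zero.mp hzero
    simpa using this
  exact Units.ext (by simpa using hg1)
end

section
/- Let V' , V, W be finite-dimensional complex vector spaces, X = (A,B,I,J) a stable ADHM datum on (V,W), and A', B' ∈ End(V'). Then the linear map φ: Hom(V',V)⊕Hom(V',V)⊕Hom(V',W) → Hom(V',V) given by φ(a,b,j) = Ab − bA' + aB' − Ba + Ij is surjective. -/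
open LinearMap

lemma trace_smulRight' {N : Type} [AddCommGroup N] [Module ℂ N] [FiniteDimensional ℂ N]
    (g : N →ₗ[ℂ] ℂ) (z : N) : trace ℂ N (g.smulRight z) = g z := by
  have h : g.smulRight z = (toSpanSingleton ℂ N z) ∘ₗ g := by ext x; simp [toSpanSingleton]
  rw [h, trace_comp_comm']
  have h2 : (g ∘ₗ toSpanSingleton ℂ N z) = (g z) • LinearMap.id := by
    ext; simp [toSpanSingleton, mul_comm]
  rw [h2]
  simp [trace_id]

lemma trace_pairing_inj {M N : Type} [AddCommGroup M] [Module ℂ M] [FiniteDimensional ℂ M]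
    [AddCommGroup N] [Module ℂ N] [FiniteDimensional ℂ N]
    (Φ : M →ₗ[ℂ] N) (h : ∀ b : N →ₗ[ℂ] M, trace ℂ N (Φ ∘ₗ b) = 0) : Φ = 0 := by
  ext x
  show Φ x = 0
  rw [← Module.forall_dual_apply_eq_zero_iff ℂ (Φ x)]
  intro g
  have := h (g.smulRight x)
  have hc : Φ ∘ₗ g.smulRight x = g.smulRight (Φ x) := by ext; simp
  rwa [hc, trace_smulRight'] at this



/-- If X = (A,B,I,J) is a stable ADHM datum on (V,W) and A',B' ∈ End(V'),
then φ(a,b,j) = Ab − bA' + aB' − Ba + Ij is surjective onto Hom(V',V). -/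
theorem adhm_phi_surjective_of_stable
    {V V' W : Type} [AddCommGroup V] [Module ℂ V] [FiniteDimensional ℂ V]
    [AddCommGroup V'] [Module ℂ V'] [FiniteDimensional ℂ V']
    [AddCommGroup W] [Module ℂ W] [FiniteDimensional ℂ W]
    (A B : Module.End ℂ V) (I : W →ₗ[ℂ] V) (J : V →ₗ[ℂ] W)
    (A' B' : Module.End ℂ V')
    (hstable : ∀ S : Submodule ℂ V, Submodule.map A S ≤ S → Submodule.map B S ≤ S →
      LinearMap.range I ≤ S → S = ⊤) :
    Function.Surjective
      (fun x : (V' →ₗ[ℂ] V) × (V' →ₗ[ℂ] V) × (V' →ₗ[ℂ] W) =>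
        A ∘ₗ x.2.1 - x.2.1 ∘ₗ A' + x.1 ∘ₗ B' - B ∘ₗ x.1 + I ∘ₗ x.2.2) := by
  set T : ((V' →ₗ[ℂ] V) × (V' →ₗ[ℂ] V) × (V' →ₗ[ℂ] W)) →ₗ[ℂ] (V' →ₗ[ℂ] V) :=
    { toFun := fun x => A ∘ₗ x.2.1 - x.2.1 ∘ₗ A' + x.1 ∘ₗ B' - B ∘ₗ x.1 + I ∘ₗ x.2.2
      map_add' := by intro x y; ext v; simp; abel
      map_smul' := by intro c x; ext v; simp [smul_sub, smul_add] } with hTdef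
  show Function.Surjective T
  rw [← LinearMap.range_eq_top]
  by_contra hne
  obtain ⟨f, hf0, hfbot⟩ := Submodule.exists_dual_map_eq_bot_of_lt_top
    (lt_top_iff_ne_top.mpr hne) inferInstance
  -- f vanishes on range T
  have hvan : ∀ x, f (T x) = 0 := by
    intro x
    have : f (T x) ∈ Submodule.map f (LinearMap.range T) :=
      Submodule.mem_map_of_mem (LinearMap.mem_range_self T x)
    rwa [hfbot, Submodule.mem_bot] at this
  -- trace pairing realizes f
  set P : (V →ₗ[ℂ] V') →ₗ[ℂ] Module.Dual ℂ (V' →ₗ[ℂ] V) :=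
    { toFun := fun Φ => (trace ℂ V') ∘ₗ (LinearMap.llcomp ℂ V' V V' Φ)
      map_add' := by intro x y; ext b; simp
      map_smul' := by intro c x; ext b; simp } with hPdef
  have hPinj : Function.Injective P := by
    rw [← LinearMap.ker_eq_bot, Submodule.eq_bot_iff]
    intro Φ hΦ
    refine trace_pairing_inj Φ (fun b => ?_)
    have := LinearMap.congr_fun hΦ b
    have h' : P Φ b = 0 := by simpa using this
    exact h'
  have hdim : Module.finrank ℂ (V →ₗ[ℂ] V') = Module.finrank ℂ (Module.Dual ℂ (V' →ₗ[ℂ] V)) := by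
    rw [Subspace.dual_finrank_eq, Module.finrank_linearMap, Module.finrank_linearMap, mul_comm]
  have hPsurj : Function.Surjective P :=
    ((LinearMap.injective_iff_surjective_of_finrank_eq_finrank hdim).mp hPinj)
  obtain ⟨Φ, hΦf⟩ := hPsurj f
  have hΦ0 : Φ ≠ 0 := by rintro rfl; simp at hΦf; exact hf0 hΦf.symm
  have htr : ∀ x : (V' →ₗ[ℂ] V) × (V' →ₗ[ℂ] V) × (V' →ₗ[ℂ] W),
      trace ℂ V' (Φ ∘ₗ (A ∘ₗ x.2.1 - x.2.1 ∘ₗ A' + x.1 ∘ₗ B' - B ∘ₗ x.1 + I ∘ₗ x.2.2)) = 0 := by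
    intro x
    have := hvan x
    rw [← hΦf] at this
    exact this
  -- (1) Φ ∘ A = A' ∘ Φ
  have h1 : Φ ∘ₗ (A : V →ₗ[ℂ] V) = (A' : V' →ₗ[ℂ] V') ∘ₗ Φ := by
    rw [← sub_eq_zero]
    apply trace_pairing_inj
    intro b
    have := htr (0, b, 0)
    simp only [comp_zero, zero_comp, add_zero, sub_zero, zero_sub, zero_add] at this
    have hrw : Φ ∘ₗ (A ∘ₗ b - b ∘ₗ A') = (Φ ∘ₗ A) ∘ₗ b - (Φ ∘ₗ b) ∘ₗ A' := by
      ext; simp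
    rw [hrw, map_sub] at this
    have hrw2 : (Φ ∘ₗ (A : V →ₗ[ℂ] V) - (A' : V' →ₗ[ℂ] V') ∘ₗ Φ) ∘ₗ b
        = (Φ ∘ₗ A) ∘ₗ b - A' ∘ₗ (Φ ∘ₗ b) := by ext; simp
    rw [hrw2, map_sub, trace_comp_comm' (Φ ∘ₗ b) A']
    exact this
  -- (2) Φ ∘ B = B' ∘ Φ
  have h2 : Φ ∘ₗ (B : V →ₗ[ℂ] V) = (B' : V' →ₗ[ℂ] V') ∘ₗ Φ := by
    rw [← sub_eq_zero]
    apply trace_pairing_inj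
    intro a
    have := htr (a, 0, 0)
    simp only [comp_zero, zero_comp, add_zero, sub_zero, zero_sub, zero_add, zero_add] at this
    have hrw : Φ ∘ₗ (a ∘ₗ B' - B ∘ₗ a) = (Φ ∘ₗ a) ∘ₗ B' - (Φ ∘ₗ B) ∘ₗ a := by
      ext; simp
    rw [hrw, map_sub] at this
    have hrw2 : (Φ ∘ₗ (B : V →ₗ[ℂ] V) - (B' : V' →ₗ[ℂ] V') ∘ₗ Φ) ∘ₗ a
        = (Φ ∘ₗ B) ∘ₗ a - B' ∘ₗ (Φ ∘ₗ a) := by ext; simp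
    rw [hrw2, map_sub, trace_comp_comm' (Φ ∘ₗ a) B', sub_eq_zero]
    rw [sub_eq_zero] at this
    exact this.symm
  -- (3) Φ ∘ I = 0
  have h3 : Φ ∘ₗ I = 0 := by
    apply trace_pairing_inj
    intro j
    have := htr (0, 0, j)
    simp only [comp_zero, zero_comp, add_zero, sub_zero, zero_sub, zero_add, neg_zero] at this
    have hrw : Φ ∘ₗ (I ∘ₗ j) = (Φ ∘ₗ I) ∘ₗ j := by ext; simp
    rwa [hrw] at this
  -- ker Φ is invariant and contains range I
  have hker : LinearMap.ker Φ = ⊤ := by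
    apply hstable
    · rintro x ⟨s, hs, rfl⟩
      have : Φ (A s) = A' (Φ s) := LinearMap.congr_fun h1 s
      simp only [LinearMap.mem_ker] at hs ⊢
      rw [show (A : V →ₗ[ℂ] V) s = A s from rfl] at *
      rw [this, hs, map_zero]
    · rintro x ⟨s, hs, rfl⟩
      have : Φ (B s) = B' (Φ s) := LinearMap.congr_fun h2 s
      simp only [LinearMap.mem_ker] at hs ⊢
      rw [this, hs, map_zero]
    · rintro x ⟨w, rfl⟩
      simpa using LinearMap.congr_fun h3 w
  exact hΦ0 (LinearMap.ker_eq_top.mp hker)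
end

section
/- Let X = (A,B,I,J) be a solution of the ADHM equation [A,B] + IJ = 0 with dim V = c. Then the image of the map R(X): W^{⊕c²} → V, (w_{kl}) ↦ Σ_{0≤k,l≤c−1} A^k B^l I w_{kl}, equals the stabilizing subspace Σ_X. In particular, R(X) is surjective if and only if X is stable. -/
/-- Cayley–Hamilton consequence: `A ^ c` is a linear combination of lower powers. -/
lemma adhm_pow_dim_eq_sum {V : Type} [AddCommGroup V] [Module ℂ V] [FiniteDimensional ℂ V]
    {c : ℕ} (hc : Module.finrank ℂ V = c) (A : Module.End ℂ V) :
    ∃ a : Fin c → ℂ, A ^ c = ∑ j : Fin c, a j • A ^ (j : ℕ) := by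
  set p := LinearMap.charpoly A with hp
  have hm : p.Monic := LinearMap.charpoly_monic A
  have hd : p.natDegree = c := by rw [hp, LinearMap.charpoly_natDegree, hc]
  have h0 : (Polynomial.aeval A) p = 0 := LinearMap.aeval_self_charpoly A
  have hsum : (Polynomial.aeval A) p = ∑ i ∈ Finset.range (c + 1), p.coeff i • A ^ i :=
    Polynomial.aeval_eq_sum_range' (by omega) A
  rw [Finset.sum_range_succ, h0] at hsum
  have hlead : p.coeff c = 1 := by rw [← hd]; exact hm.coeff_natDegree
  rw [hlead, one_smul] at hsum
  refine ⟨fun j => -p.coeff (j : ℕ), ?_⟩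
  have hAc : A ^ c = -∑ i ∈ Finset.range c, p.coeff i • A ^ i :=
    eq_neg_of_add_eq_zero_right hsum.symm
  rw [hAc, ← Finset.sum_neg_distrib]
  rw [Finset.sum_congr rfl (fun i _ => (neg_smul (p.coeff i) (A ^ i)).symm)]
  exact (Fin.sum_univ_eq_sum_range (fun i => (-p.coeff i) • A ^ i) c).symm

/-- Reordering identity `B A^k = A^k B + ∑ A^{k-1-s} (I∘J) A^s`. -/
lemma adhm_reorder {V W : Type} [AddCommGroup V] [Module ℂ V]
    [AddCommGroup W] [Module ℂ W]
    (A B : Module.End ℂ V) (I : W →ₗ[ℂ] V) (J : V →ₗ[ℂ] W)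
    (h : B * A = A * B + (I ∘ₗ J : Module.End ℂ V)) (k : ℕ) :
    B * A ^ k = A ^ k * B +
      ∑ s ∈ Finset.range k, A ^ (k - 1 - s) * (I ∘ₗ J : Module.End ℂ V) * A ^ s := by
  induction k with
  | zero => simp
  | succ k ih =>
    have : B * A ^ (k + 1) = (B * A ^ k) * A := by rw [mul_assoc, ← pow_succ]
    rw [this, ih, add_mul, Finset.sum_mul]
    rw [Finset.sum_range_succ' (fun s => A ^ (k + 1 - 1 - s) * (I ∘ₗ J : Module.End ℂ V) * A ^ s) k]
    have h1 : A ^ k * B * A = A ^ (k + 1) * B + A ^ k * (I ∘ₗ J : Module.End ℂ V) := by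
      rw [mul_assoc, h, mul_add, ← mul_assoc, ← pow_succ]
    rw [h1]
    have h2 : ∀ s ∈ Finset.range k,
        A ^ (k - 1 - s) * (I ∘ₗ J : Module.End ℂ V) * A ^ s * A
          = A ^ (k + 1 - 1 - (s + 1)) * (I ∘ₗ J : Module.End ℂ V) * A ^ (s + 1) := by
      intro s hs
      have hss := Finset.mem_range.mp hs
      have he : k + 1 - 1 - (s + 1) = k - 1 - s := by omega
      rw [he, mul_assoc, ← pow_succ]
    rw [Finset.sum_congr rfl h2]
    have h3 : A ^ (k + 1 - 1 - 0) * (I ∘ₗ J : Module.End ℂ V) * A ^ 0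
        = A ^ k * (I ∘ₗ J : Module.End ℂ V) := by
      simp
    rw [h3]
    abel

/-- If `S` is `f`-invariant then it is `f ^ n`-invariant. -/
lemma adhm_pow_stab {V : Type} [AddCommGroup V] [Module ℂ V]
    (f : Module.End ℂ V) (S : Submodule ℂ V) (h : Submodule.map f S ≤ S) :
    ∀ n : ℕ, ∀ v ∈ S, (f ^ n) v ∈ S := by
  intro n
  induction n with
  | zero => intro v hv; simpa using hv
  | succ n ih =>
    intro v hv
    rw [pow_succ, Module.End.mul_apply]
    exact ih _ (h (Submodule.mem_map_of_mem hv))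

/-- If X solves the ADHM equation and dim V = c, then the image of
R(X) : W^{⊕c²} → V equals the stabilizing subspace Σ_X; in particular R(X) is surjective
iff X is stable. -/
theorem adhm_R_range_eq_stabilizing
    {V W : Type} [AddCommGroup V] [Module ℂ V] [FiniteDimensional ℂ V]
    [AddCommGroup W] [Module ℂ W] [FiniteDimensional ℂ W]
    (c : ℕ) (hc : Module.finrank ℂ V = c)
    (A B : Module.End ℂ V) (I : W →ₗ[ℂ] V) (J : V →ₗ[ℂ] W)
    (hADHM : A * B - B * A + (I ∘ₗ J : Module.End ℂ V) = 0) :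
    (∀ v : V,
      v ∈ sInf {S : Submodule ℂ V | Submodule.map A S ≤ S ∧ Submodule.map B S ≤ S ∧
          LinearMap.range I ≤ S} ↔
      ∃ w : Fin c × Fin c → W,
        (∑ kl : Fin c × Fin c, (A ^ (kl.1 : ℕ) * B ^ (kl.2 : ℕ)) (I (w kl))) = v) ∧
    (Function.Surjective
        (fun w : Fin c × Fin c → W =>
          ∑ kl : Fin c × Fin c, (A ^ (kl.1 : ℕ) * B ^ (kl.2 : ℕ)) (I (w kl))) ↔
      ∀ S : Submodule ℂ V, Submodule.map A S ≤ S → Submodule.map B S ≤ S →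
        LinearMap.range I ≤ S → S = ⊤) := by
  classical
  -- degenerate case c = 0
  rcases Nat.eq_zero_or_pos c with hc0 | hcpos
  · subst hc0
    have hsub : Subsingleton V := by
      rw [← Module.finrank_zero_iff (R := ℂ)]; exact hc
    constructor
    · intro v
      constructor
      · intro _
        exact ⟨fun _ => 0, by simpa using (Subsingleton.elim (0 : V) v)⟩
      · intro _
        have : v = 0 := Subsingleton.elim _ _
        rw [this]
        exact zero_mem _
    · constructor
      · intro _ S _ _ _
        exact Subsingleton.elim _ _
      · intro _ v
        exact ⟨fun _ => 0, Subsingleton.elim _ _⟩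
  -- main case
  have hBA : B * A = A * B + (I ∘ₗ J : Module.End ℂ V) := by
    have h : B * A = A * B + (I ∘ₗ J : Module.End ℂ V)
        - (A * B - B * A + (I ∘ₗ J : Module.End ℂ V)) := by abel
    rw [h, hADHM, sub_zero]
  obtain ⟨a, ha⟩ := adhm_pow_dim_eq_sum hc A
  obtain ⟨b, hb⟩ := adhm_pow_dim_eq_sum hc B
  set gens : Set V := {v | ∃ k l : ℕ, ∃ w : W, k < c ∧ l < c ∧ (A ^ k * B ^ l) (I w) = v}
    with hgens
  set M : Submodule ℂ V := Submodule.span ℂ gens with hM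
  have hgenM : ∀ k l : ℕ, ∀ w : W, k < c → l < c → (A ^ k * B ^ l) (I w) ∈ M :=
    fun k l w hk hl => Submodule.subset_span ⟨k, l, w, hk, hl, rfl⟩
  -- A^k (I w) terms for k = c
  have hAc : ∀ l : ℕ, ∀ w : W, l < c → (A ^ c * B ^ l) (I w) ∈ M := by
    intro l w hl
    rw [ha, Finset.sum_mul, LinearMap.sum_apply]
    refine Submodule.sum_mem _ fun j _ => ?_
    rw [smul_mul_assoc, LinearMap.smul_apply]
    exact Submodule.smul_mem _ _ (hgenM _ _ _ j.2 hl)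
  have hBc : ∀ k : ℕ, ∀ w : W, k < c → (A ^ k * B ^ c) (I w) ∈ M := by
    intro k w hk
    rw [hb, Finset.mul_sum, LinearMap.sum_apply]
    refine Submodule.sum_mem _ fun j _ => ?_
    rw [mul_smul_comm, LinearMap.smul_apply]
    exact Submodule.smul_mem _ _ (hgenM _ _ _ hk j.2)
  -- M is A-invariant
  have hMA : Submodule.map A M ≤ M := by
    rw [hM, Submodule.map_span, Submodule.span_le]
    rintro _ ⟨_, ⟨k, l, w, hk, hl, rfl⟩, rfl⟩
    have hstep : A ((A ^ k * B ^ l) (I w)) = (A ^ (k + 1) * B ^ l) (I w) := by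
      rw [← Module.End.mul_apply, ← mul_assoc, ← pow_succ']
    rw [hstep]
    rcases Nat.lt_or_ge (k + 1) c with h | h
    · exact hgenM _ _ _ h hl
    · have : k + 1 = c := by omega
      rw [this]; exact hAc _ _ hl
  -- M is B-invariant
  have hMB : Submodule.map B M ≤ M := by
    rw [hM, Submodule.map_span, Submodule.span_le]
    rintro _ ⟨_, ⟨k, l, w, hk, hl, rfl⟩, rfl⟩
    have hstep : B ((A ^ k * B ^ l) (I w)) = (B * A ^ k * B ^ l) (I w) := by
      rw [← Module.End.mul_apply, ← mul_assoc]
    rw [hstep, adhm_reorder A B I J hBA k, add_mul, LinearMap.add_apply]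
    refine Submodule.add_mem _ ?_ ?_
    · have h1 : (A ^ k * B * B ^ l) (I w) = (A ^ k * B ^ (l + 1)) (I w) := by
        rw [mul_assoc, ← pow_succ']
      rw [h1]
      rcases Nat.lt_or_ge (l + 1) c with h | h
      · exact hgenM _ _ _ hk h
      · have : l + 1 = c := by omega
        rw [this]; exact hBc _ _ hk
    · rw [Finset.sum_mul, LinearMap.sum_apply]
      refine Submodule.sum_mem _ fun s hs => ?_
      have h2 : (A ^ (k - 1 - s) * (I ∘ₗ J : Module.End ℂ V) * A ^ s * B ^ l) (I w)
          = (A ^ (k - 1 - s) * B ^ 0) (I (J ((A ^ s * B ^ l) (I w)))) := by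
        simp [Module.End.mul_apply, LinearMap.comp_apply, mul_assoc]
      rw [h2]
      exact hgenM _ _ _ (by have := Finset.mem_range.mp hs; omega) hcpos
  -- M contains range I
  have hMI : LinearMap.range I ≤ M := by
    rintro _ ⟨w, rfl⟩
    have : I w = (A ^ 0 * B ^ 0) (I w) := by simp
    rw [this]
    exact hgenM _ _ _ hcpos hcpos
  set 𝒮 : Set (Submodule ℂ V) := {S : Submodule ℂ V | Submodule.map A S ≤ S ∧
      Submodule.map B S ≤ S ∧ LinearMap.range I ≤ S} with h𝒮
  have hMmem : M ∈ 𝒮 := ⟨hMA, hMB, hMI⟩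
  -- sInf 𝒮 is itself in 𝒮
  have hinfA : Submodule.map A (sInf 𝒮) ≤ sInf 𝒮 := by
    refine le_sInf fun S hS => ?_
    exact le_trans (Submodule.map_mono (sInf_le hS)) hS.1
  have hinfB : Submodule.map B (sInf 𝒮) ≤ sInf 𝒮 := by
    refine le_sInf fun S hS => ?_
    exact le_trans (Submodule.map_mono (sInf_le hS)) hS.2.1
  have hinfI : LinearMap.range I ≤ sInf 𝒮 := le_sInf fun S hS => hS.2.2
  -- M ≤ sInf 𝒮
  have hMle : M ≤ sInf 𝒮 := by
    rw [hM, Submodule.span_le]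
    rintro _ ⟨k, l, w, hk, hl, rfl⟩
    have h1 : I w ∈ sInf 𝒮 := hinfI ⟨w, rfl⟩
    have h2 : (B ^ l) (I w) ∈ sInf 𝒮 := adhm_pow_stab B _ hinfB l _ h1
    have h3 : (A ^ k) ((B ^ l) (I w)) ∈ sInf 𝒮 := adhm_pow_stab A _ hinfA k _ h2
    simpa [Module.End.mul_apply] using h3
  have hSigmaM : sInf 𝒮 = M := le_antisymm (sInf_le hMmem) hMle
  -- the linear map R
  set Rlin : (Fin c × Fin c → W) →ₗ[ℂ] V :=
    ∑ kl : Fin c × Fin c, ((A ^ (kl.1 : ℕ) * B ^ (kl.2 : ℕ)) ∘ₗ I) ∘ₗ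
      (LinearMap.proj kl : (Fin c × Fin c → W) →ₗ[ℂ] W) with hRlin
  have hRapp : ∀ w : Fin c × Fin c → W,
      (∑ kl : Fin c × Fin c, (A ^ (kl.1 : ℕ) * B ^ (kl.2 : ℕ)) (I (w kl))) = Rlin w := by
    intro w
    rw [hRlin, LinearMap.sum_apply]
    rfl
  have hrange : LinearMap.range Rlin = M := by
    apply le_antisymm
    · rintro _ ⟨w, rfl⟩
      rw [← hRapp]
      exact Submodule.sum_mem _ fun kl _ => hgenM _ _ _ kl.1.2 kl.2.2
    · rw [hM, Submodule.span_le]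
      rintro _ ⟨k, l, w, hk, hl, rfl⟩
      refine ⟨Pi.single (⟨k, hk⟩, ⟨l, hl⟩) w, ?_⟩
      rw [← hRapp]
      rw [Finset.sum_eq_single ((⟨k, hk⟩ : Fin c), (⟨l, hl⟩ : Fin c))]
      · simp
      · intro kl _ hne
        rw [Pi.single_eq_of_ne hne, map_zero, map_zero]
      · intro h
        exact absurd (Finset.mem_univ _) h
  have hpart1 : ∀ v : V, v ∈ sInf 𝒮 ↔
      ∃ w : Fin c × Fin c → W,
        (∑ kl : Fin c × Fin c, (A ^ (kl.1 : ℕ) * B ^ (kl.2 : ℕ)) (I (w kl))) = v := by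
    intro v
    rw [hSigmaM, ← hrange]
    constructor
    · rintro ⟨w, rfl⟩
      exact ⟨w, hRapp w⟩
    · rintro ⟨w, rfl⟩
      exact ⟨w, (hRapp w).symm⟩
  refine ⟨hpart1, ?_⟩
  constructor
  · intro hsurj S hSA hSB hSI
    have hMtop : M = ⊤ := by
      rw [← hrange]
      rw [LinearMap.range_eq_top]
      intro v
      obtain ⟨w, hw⟩ := hsurj v
      exact ⟨w, (hRapp w).symm.trans hw⟩
    have : sInf 𝒮 ≤ S := sInf_le (show S ∈ 𝒮 from ⟨hSA, hSB, hSI⟩)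
    rw [hSigmaM, hMtop] at this
    exact top_le_iff.mp this
  · intro hstab v
    have hMtop : M = ⊤ := hstab M hMA hMB hMI
    have hv : v ∈ M := hMtop ▸ Submodule.mem_top
    rw [← hrange] at hv
    obtain ⟨w, hw⟩ := hv
    exact ⟨w, (hRapp w).trans hw⟩
end

section
/- Let X = (A,B,I,J) be a stable solution of the ADHM equation with dim W = 1. Then J = 0. -/
set_option linter.unusedSectionVars false
set_option maxHeartbeats 1000000

namespace ADHMAux

variable {V : Type} [AddCommGroup V] [Module ℂ V] [FiniteDimensional ℂ V]

noncomputable def W (A B : Module.End ℂ V) (l : List Bool) : Module.End ℂ V :=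
  (l.map (fun b => if b then A else B)).prod

variable (A B : Module.End ℂ V)

@[simp] lemma W_nil : W A B [] = 1 := rfl

@[simp] lemma W_cons (b : Bool) (l : List Bool) :
    W A B (b :: l) = (if b then A else B) * W A B l := by
  simp [W]

lemma W_append (l₁ l₂ : List Bool) : W A B (l₁ ++ l₂) = W A B l₁ * W A B l₂ := by
  simp [W]

lemma W_replicate_true (i : ℕ) : W A B (List.replicate i true) = A ^ i := by
  simp [W, List.map_replicate]

lemma W_replicate_false (j : ℕ) : W A B (List.replicate j false) = B ^ j := by
  simp [W, List.map_replicate]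

lemma trace_one_dim (f : ℂ →ₗ[ℂ] ℂ) : LinearMap.trace ℂ ℂ f = f 1 := by
  have h : f = f 1 • LinearMap.id := by
    apply LinearMap.ext
    intro x
    have h2 := f.map_smul x 1
    simp only [smul_eq_mul, mul_one] at h2
    simp [h2, mul_comm]
  rw [h]
  simp [LinearMap.trace_id]

lemma trace_mul_IJ (I : ℂ →ₗ[ℂ] V) (J : V →ₗ[ℂ] ℂ) (C : Module.End ℂ V) :
    LinearMap.trace ℂ V (C * (I ∘ₗ J)) = J (C (I 1)) := by
  have h1 : (C * (I ∘ₗ J) : Module.End ℂ V) = (C ∘ₗ I) ∘ₗ J := by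
    apply LinearMap.ext; intro v
    simp [Module.End.mul_apply]
  rw [h1, ← LinearMap.trace_comp_comm', trace_one_dim]
  rfl

lemma comm_pow (E : Module.End ℂ V) (h : B * A = A * B + E) (i : ℕ) :
    B * A ^ i = A ^ i * B + ∑ s ∈ Finset.range i, A ^ s * E * A ^ (i - 1 - s) := by
  induction i with
  | zero => simp
  | succ i ih =>
    rw [pow_succ, ← mul_assoc, ih, add_mul, mul_assoc, h, Finset.sum_range_succ]
    have h2 : ∀ s ∈ Finset.range i, A ^ s * E * A ^ (i - 1 - s) * A = A ^ s * E * A ^ (i - s) := by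
      intro s hs
      rw [Finset.mem_range] at hs
      rw [mul_assoc, ← pow_succ]
      congr 2
      omega
    rw [Finset.sum_mul, Finset.sum_congr rfl h2]
    simp [mul_add, pow_succ, mul_assoc]
    abel

lemma norm_form : ∀ l : List Bool, ∃ i j : ℕ, i + j = l.length ∧
    l.Perm (List.replicate i true ++ List.replicate j false) := by
  intro l
  induction l with
  | nil => exact ⟨0, 0, rfl, by simp⟩
  | cons b l ihl =>
    obtain ⟨i, j, hij, hp⟩ := ihl
    cases b with
    | true =>
      refine ⟨i + 1, j, by simp; omega, ?_⟩
      rw [List.replicate_succ, List.cons_append]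
      exact hp.cons true
    | false =>
      refine ⟨i, j + 1, by simp; omega, ?_⟩
      refine (hp.cons false).trans ?_
      rw [List.replicate_succ]
      exact List.perm_middle.symm

lemma J_word_eq_zero (I : ℂ →ₗ[ℂ] V) (J : V →ₗ[ℂ] ℂ)
    (hADHM : A * B - B * A + (I ∘ₗ J : Module.End ℂ V) = 0) :
    ∀ n : ℕ, ∀ l : List Bool, l.length = n → J (W A B l (I 1)) = 0 := by
  have hBA : B * A = A * B + (I ∘ₗ J : Module.End ℂ V) := by
    rw [← sub_eq_zero]
    calc B * A - (A * B + (I ∘ₗ J : Module.End ℂ V))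
        = -(A * B - B * A + (I ∘ₗ J : Module.End ℂ V)) := by abel
      _ = 0 := by rw [hADHM, neg_zero]
  set E : Module.End ℂ V := I ∘ₗ J with hE
  have hEapp : ∀ v : V, E v = J v • I 1 := by
    intro v
    show I (J v) = J v • I 1
    rw [← map_smul, smul_eq_mul, mul_one]
  intro n
  induction n using Nat.strong_induction_on with
  | _ n ih =>
  have hperm : ∀ {l₁ l₂ : List Bool}, l₁.Perm l₂ → ∀ pre : List Bool,
      pre.length + l₁.length = n →
      J (W A B (pre ++ l₁) (I 1)) = J (W A B (pre ++ l₂) (I 1)) := by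
    intro l₁ l₂ h
    induction h with
    | nil => intro pre _; rfl
    | cons x h ihp =>
      intro pre hlen
      have hW : ∀ l : List Bool, W A B (pre ++ x :: l) = W A B ((pre ++ [x]) ++ l) := by
        intro l; rw [← List.append_cons]
      rw [hW, hW]
      refine ihp (pre ++ [x]) ?_
      simp only [List.length_append, List.length_cons, List.length_nil] at hlen ⊢
      omega
    | swap x y l =>
      intro pre hlen
      have hl : J (W A B l (I 1)) = 0 := by
        refine ih l.length ?_ l rfl
        simp only [List.length_cons] at hlen
        omega
      have key : ∀ u w : Module.End ℂ V, J (w (I 1)) = 0 →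
          J ((u * (B * (A * w))) (I 1)) = J ((u * (A * (B * w))) (I 1)) := by
        intro u w hw
        have h1 : u * (B * (A * w)) = u * (A * (B * w)) + u * (E * w) := by
          have h0 : B * (A * w) = A * (B * w) + E * w := by
            rw [← mul_assoc, hBA]
            noncomm_ring
          rw [h0]
          noncomm_ring
        have h2 : (u * (E * w)) (I 1) = 0 := by
          show u (E (w (I 1))) = 0
          rw [hEapp, hw, zero_smul, map_zero]
        rw [h1, LinearMap.add_apply, map_add, h2, map_zero, add_zero]
      cases x <;> cases y
      · rfl
      · -- x = false, y = true : pre ++ true::false::l  vs  pre ++ false::true::l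
        have e1 : W A B (pre ++ true :: false :: l)
            = W A B pre * (A * (B * W A B l)) := by
          simp [W_append, W_cons]
        have e2 : W A B (pre ++ false :: true :: l)
            = W A B pre * (B * (A * W A B l)) := by
          simp [W_append, W_cons]
        rw [e1, e2]
        exact (key _ _ hl).symm
      · have e1 : W A B (pre ++ false :: true :: l)
            = W A B pre * (B * (A * W A B l)) := by
          simp [W_append, W_cons]
        have e2 : W A B (pre ++ true :: false :: l)
            = W A B pre * (A * (B * W A B l)) := by
          simp [W_append, W_cons]
        rw [e1, e2]
        exact key _ _ hl
      · rfl
    | trans h₁ h₂ ih₁ ih₂ =>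
      intro pre hlen
      refine (ih₁ pre hlen).trans (ih₂ pre ?_)
      rw [← h₁.length_eq]
      exact hlen
  have key : ∀ i j : ℕ, i + j = n → J ((A ^ i * B ^ j) (I 1)) = 0 := by
    intro i j hij
    set c := J ((A ^ i * B ^ j) (I 1)) with hc
    have htr : ∀ C : Module.End ℂ V, LinearMap.trace ℂ V (C * E) = J (C (I 1)) :=
      trace_mul_IJ I J
    have hEc : E = B * A - A * B := by rw [hBA]; abel
    have step1 : c = LinearMap.trace ℂ V (A ^ i * B ^ j * E) := (htr _).symm
    have expand : A ^ i * B ^ j * E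
        = A ^ i * B ^ (j + 1) * A - A ^ i * B ^ j * (A * B) := by
      rw [hEc, pow_succ]
      noncomm_ring
    have cyc : LinearMap.trace ℂ V (A ^ i * B ^ j * (A * B)) =
        LinearMap.trace ℂ V (B * (A ^ i * (B ^ j * A))) := by
      have e : A ^ i * B ^ j * (A * B) = (A ^ i * (B ^ j * A)) * B := by
        noncomm_ring
      rw [e, LinearMap.trace_mul_comm]
    have comm := comm_pow A B E hBA i
    have expand2 : B * (A ^ i * (B ^ j * A)) =
        A ^ i * B ^ (j + 1) * A +
        ∑ s ∈ Finset.range i, (A ^ s * E) * (A ^ (i - 1 - s) * (B ^ j * A)) := by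
      rw [← mul_assoc, comm, add_mul, Finset.sum_mul]
      have hbb : B * B ^ j = B ^ (j + 1) := (pow_succ' B j).symm
      have h1 : A ^ i * B * (B ^ j * A) = A ^ i * B ^ (j + 1) * A := by
        calc A ^ i * B * (B ^ j * A) = A ^ i * (B * B ^ j) * A := by noncomm_ring
          _ = A ^ i * B ^ (j + 1) * A := by rw [hbb]
      rw [h1]
      congr 1
    have tr_term : ∀ s ∈ Finset.range i,
        LinearMap.trace ℂ V ((A ^ s * E) * (A ^ (i - 1 - s) * (B ^ j * A))) = c := by
      intro s hs
      rw [Finset.mem_range] at hs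
      rw [LinearMap.trace_mul_comm]
      have e : (A ^ (i - 1 - s) * (B ^ j * A)) * (A ^ s * E)
          = (A ^ (i - 1 - s) * B ^ j * A ^ (s + 1)) * E := by
        have haa : A * A ^ s = A ^ (s + 1) := (pow_succ' A s).symm
        calc (A ^ (i - 1 - s) * (B ^ j * A)) * (A ^ s * E)
            = (A ^ (i - 1 - s) * B ^ j * (A * A ^ s)) * E := by noncomm_ring
          _ = _ := by rw [haa]
      rw [e, htr]
      have hword : A ^ (i - 1 - s) * B ^ j * A ^ (s + 1) =
          W A B (List.replicate (i - 1 - s) true ++ List.replicate j false ++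
            List.replicate (s + 1) true) := by
        rw [W_append, W_append, W_replicate_true, W_replicate_false, W_replicate_true]
      have hperm2 : (List.replicate (i - 1 - s) true ++ List.replicate j false ++
            List.replicate (s + 1) true).Perm
          (List.replicate i true ++ List.replicate j false) := by
        rw [List.perm_iff_count]
        intro a
        cases a <;> simp [List.count_append, List.count_replicate] <;> omega
      rw [hword]
      have h3 := hperm hperm2 [] (by simp [List.length_append]; omega)
      simp only [List.nil_append] at h3
      rw [h3, W_append, W_replicate_true, W_replicate_false]
    have main : c = -((i : ℂ) * c) := by
      calc c = LinearMap.trace ℂ V (A ^ i * B ^ j * E) := step1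
        _ = LinearMap.trace ℂ V (A ^ i * B ^ (j + 1) * A)
            - LinearMap.trace ℂ V (A ^ i * B ^ j * (A * B)) := by rw [expand, map_sub]
        _ = LinearMap.trace ℂ V (A ^ i * B ^ (j + 1) * A)
            - (LinearMap.trace ℂ V (A ^ i * B ^ (j + 1) * A) + (i : ℂ) * c) := by
            rw [cyc, expand2, map_add, map_sum, Finset.sum_congr rfl tr_term,
              Finset.sum_const, Finset.card_range, nsmul_eq_mul]
        _ = -((i : ℂ) * c) := by ring
    have hzero : ((i : ℂ) + 1) * c = 0 := by
      calc ((i : ℂ) + 1) * c = (i : ℂ) * c + c := by ring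
        _ = (i : ℂ) * c + -((i : ℂ) * c) := by rw [← main]
        _ = 0 := by ring
    have hi : ((i : ℂ) + 1) ≠ 0 := Nat.cast_add_one_ne_zero i
    exact (mul_eq_zero.mp hzero).resolve_left hi
  intro l hl
  obtain ⟨i, j, hij, hp⟩ := norm_form l
  have h4 := hperm hp [] (by simpa using hl)
  simp only [List.nil_append] at h4
  rw [h4, W_append, W_replicate_true, W_replicate_false]
  exact key i j (by omega)


end ADHMAux

/-- If X = (A,B,I,J) is a stable solution of the ADHM equation with
dim W = 1 (W = ℂ), then J = 0. -/
theorem adhm_J_eq_zero_of_stable_rank_one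
    {V : Type} [AddCommGroup V] [Module ℂ V] [FiniteDimensional ℂ V]
    (A B : Module.End ℂ V) (I : ℂ →ₗ[ℂ] V) (J : V →ₗ[ℂ] ℂ)
    (hADHM : A * B - B * A + (I ∘ₗ J : Module.End ℂ V) = 0)
    (hstable : ∀ S : Submodule ℂ V, Submodule.map A S ≤ S → Submodule.map B S ≤ S →
      LinearMap.range I ≤ S → S = ⊤) :
    J = 0 := by
  classical
  set G : Set V := Set.range (fun l : List Bool => ADHMAux.W A B l (I 1)) with hG
  set S : Submodule ℂ V := Submodule.span ℂ G with hS
  have hA : Submodule.map A S ≤ S := by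
    rw [hS, Submodule.map_span]
    apply Submodule.span_le.mpr
    rintro v ⟨w, ⟨l, rfl⟩, rfl⟩
    apply Submodule.subset_span
    refine ⟨true :: l, ?_⟩
    simp [ADHMAux.W_cons, Module.End.mul_apply]
  have hB : Submodule.map B S ≤ S := by
    rw [hS, Submodule.map_span]
    apply Submodule.span_le.mpr
    rintro v ⟨w, ⟨l, rfl⟩, rfl⟩
    apply Submodule.subset_span
    refine ⟨false :: l, ?_⟩
    simp [ADHMAux.W_cons, Module.End.mul_apply]
  have hI : LinearMap.range I ≤ S := by
    rintro v ⟨c, rfl⟩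
    have : I c = c • I 1 := by rw [← map_smul, smul_eq_mul, mul_one]
    rw [this]
    apply Submodule.smul_mem
    apply Submodule.subset_span
    exact ⟨[], by simp⟩
  have hStop : S = ⊤ := hstable S hA hB hI
  have hJG : ∀ v ∈ G, J v = 0 := by
    rintro v ⟨l, rfl⟩
    exact ADHMAux.J_word_eq_zero A B I J hADHM l.length l rfl
  apply LinearMap.ext
  intro v
  have hv : v ∈ S := by rw [hStop]; trivial
  rw [hS] at hv
  refine Submodule.span_induction (p := fun v _ => J v = 0) ?_ ?_ ?_ ?_ hv
  · exact hJG
  · exact map_zero J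
  · intro x y _ _ hx hy
    rw [map_add, hx, hy, add_zero]
  · intro c x _ hx
    rw [map_smul, hx, smul_zero]
end

section
/- Let X = (A,B,I,J) be an ADHM datum on (V,W) and consider, for a point P = (p:q:1) ∈ ℂ², the linear map α_P: V → V⊕V⊕W, v ↦ ((A + p·id)v, (B + q·id)v, Jv). If [A,B] + IJ = 0, then α_P is injective for every (p,q) ∈ ℂ² if and only if X is costable. -/
/-- For X = (A,B,I,J) with [A,B] + IJ = 0, the fiber maps
α_P : v ↦ ((A+p)v, (B+q)v, Jv) are injective for every (p,q) ∈ ℂ² iff X is costable. -/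
theorem adhm_alpha_injective_iff_costable
    {V W : Type} [AddCommGroup V] [Module ℂ V] [FiniteDimensional ℂ V]
    [AddCommGroup W] [Module ℂ W] [FiniteDimensional ℂ W]
    (A B : Module.End ℂ V) (I : W →ₗ[ℂ] V) (J : V →ₗ[ℂ] W)
    (hADHM : A * B - B * A + (I ∘ₗ J : Module.End ℂ V) = 0) :
    (∀ p q : ℂ, Function.Injective
        (fun v : V => (A v + p • v, B v + q • v, J v))) ↔
    (∀ S : Submodule ℂ V, Submodule.map A S ≤ S → Submodule.map B S ≤ S →
      S ≤ LinearMap.ker J → S = ⊥) := by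
  constructor
  · intro hinj S hAS hBS hJS
    by_contra hS
    have hA' : ∀ x ∈ S, A x ∈ S := fun x hx => hAS ⟨x, hx, rfl⟩
    have hB' : ∀ x ∈ S, B x ∈ S := fun x hx => hBS ⟨x, hx, rfl⟩
    set A' := A.restrict hA' with hA'def
    set B' := B.restrict hB' with hB'def
    have : Nontrivial S := Submodule.nontrivial_iff_ne_bot.mpr hS
    have hcomm : Commute A' B' := by
      ext x
      have hx : (x : V) ∈ LinearMap.ker J := hJS x.2
      have key : (A * B - B * A + (I ∘ₗ J : Module.End ℂ V)) (x : V) = 0 := by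
        rw [hADHM]; rfl
      simp only [LinearMap.add_apply, LinearMap.sub_apply, Module.End.mul_apply,
        LinearMap.coe_comp, Function.comp_apply, LinearMap.mem_ker.mp hx,
        map_zero, add_zero, sub_eq_zero] at key
      simpa [hA'def, hB'def, Module.End.mul_apply, LinearMap.restrict_apply,
        Subtype.ext_iff] using key
    obtain ⟨a, ha⟩ := Module.End.exists_eigenvalue A'
    set E := Module.End.eigenspace A' a with hEdef
    have hEne : E ≠ ⊥ := ha
    have hBE : ∀ y ∈ E, B' y ∈ E := by
      intro y hy
      have := Module.End.mapsTo_genEigenspace_of_comm hcomm a 1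
      simpa [hEdef, Module.End.eigenspace] using this hy
    have : Nontrivial E := Submodule.nontrivial_iff_ne_bot.mpr hEne
    obtain ⟨b, hb⟩ := Module.End.exists_eigenvalue (B'.restrict hBE)
    obtain ⟨w, hw, hwne⟩ := hb.exists_hasEigenvector
    -- w : E, eigenvector of B' restricted, and (w : S) is eigenvector of A'
    set v : V := ((w : S) : V) with hvdef
    have hvne : v ≠ 0 := by
      intro h
      apply hwne
      have : (w : S) = 0 := Subtype.ext h
      exact Subtype.ext this
    have hAv : A v = a • v := by
      have := hw  -- w ∈ eigenspace of B'|E with value b; (w:S) ∈ E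
      have hwE : (w : S) ∈ E := w.2
      have : A' (w : S) = a • (w : S) := by
        have := (Module.End.mem_eigenspace_iff).mp hwE
        exact this
      exact congrArg Subtype.val this
    have hBv : B v = b • v := by
      have h1 : (B'.restrict hBE) w = b • w := Module.End.mem_eigenspace_iff.mp hw
      have h2 : B' (w : S) = b • (w : S) := congrArg Subtype.val h1
      exact congrArg Subtype.val h2
    have hJv : J v = 0 := LinearMap.mem_ker.mp (hJS (w : S).2)
    apply hvne
    apply hinj (-a) (-b)
    show (A v + (-a) • v, B v + (-b) • v, J v) = (A 0 + (-a) • 0, B 0 + (-b) • 0, J 0)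
    simp [hAv, hBv, hJv]
  · intro hco p q v₁ v₂ heq
    simp only [Prod.mk.injEq] at heq
    obtain ⟨h1, h2, h3⟩ := heq
    set u := v₁ - v₂ with hu
    have hu1 : A u + p • u = 0 := by
      simp only [hu, map_sub, smul_sub]
      rw [show A v₁ - A v₂ + (p • v₁ - p • v₂)
            = (A v₁ + p • v₁) - (A v₂ + p • v₂) by abel, h1, sub_self]
    have hu2 : B u + q • u = 0 := by
      simp only [hu, map_sub, smul_sub]
      rw [show B v₁ - B v₂ + (q • v₁ - q • v₂)
            = (B v₁ + q • v₁) - (B v₂ + q • v₂) by abel, h2, sub_self]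
    have hu3 : J u = 0 := by simp [hu, map_sub, h3]
    set K : Submodule ℂ V :=
      (LinearMap.ker (A + p • (1 : Module.End ℂ V)))
        ⊓ (LinearMap.ker (B + q • (1 : Module.End ℂ V)))
        ⊓ LinearMap.ker J with hK
    have hmem : ∀ x : V, x ∈ K ↔ (A x + p • x = 0 ∧ B x + q • x = 0 ∧ J x = 0) := by
      intro x
      simp [hK, Submodule.mem_inf, LinearMap.mem_ker, and_assoc]
    have hAK : Submodule.map A K ≤ K := by
      rintro y ⟨x, hx, rfl⟩
      obtain ⟨hx1, hx2, hx3⟩ := (hmem x).mp hx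
      have hAx : A x = (-p) • x := by
        rw [neg_smul]; exact eq_neg_of_add_eq_zero_left hx1
      rw [hAx]
      exact K.smul_mem _ hx
    have hBK : Submodule.map B K ≤ K := by
      rintro y ⟨x, hx, rfl⟩
      obtain ⟨hx1, hx2, hx3⟩ := (hmem x).mp hx
      have hBx : B x = (-q) • x := by
        rw [neg_smul]; exact eq_neg_of_add_eq_zero_left hx2
      rw [hBx]
      exact K.smul_mem _ hx
    have hJK : K ≤ LinearMap.ker J := fun x hx => LinearMap.mem_ker.mpr ((hmem x).mp hx).2.2
    have hKbot := hco K hAK hBK hJK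
    have huK : u ∈ K := (hmem u).mpr ⟨hu1, hu2, hu3⟩
    rw [hKbot, Submodule.mem_bot] at huK
    exact sub_eq_zero.mp huK
end
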